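/- arXiv:1105.0859 — 12 statements merged into one kernel-verified Lean document; each statement's English description precedes it below -/
import Mathlib

section
/- For all x in (0, π/2), (1 - cos x)/x ≤ tan(x/2)/x ≤ 2/π. -/
/-!
Writing `t = x / 2`, one has `1 - cos x = 2 sin² t = tan t · sin x`, which is at most `tan t`
since `sin x ≤ 1`. For the upper bound, `tan` is convex on `[0, π/2)` (its derivative `1 / cos²`
increases there), so on `[0, π/4]` its graph lies below the chord from `(0, 0)` to `(π/4, 1)`,
i.e. `tan t ≤ 4t/π`.
-/

open Real Set

namespace Real

theorem one_sub_cos_eq_tan_half_mul_sin {x : ℝ} (h : cos (x / 2) ≠ 0) :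
    1 - cos x = tan (x / 2) * sin x := by
  have hx : x = 2 * (x / 2) := by ring
  rw [tan_eq_sin_div_cos, hx, cos_two_mul, sin_two_mul, ← hx]
  field_simp
  nlinarith [sin_sq_add_cos_sq (x / 2)]

theorem one_sub_cos_le_tan_half {x : ℝ} (h0 : 0 ≤ x) (hπ : x < π) :
    1 - cos x ≤ tan (x / 2) := by
  have hcos : 0 < cos (x / 2) := cos_pos_of_mem_Ioo ⟨by linarith [pi_pos], by linarith⟩
  have htan : 0 ≤ tan (x / 2) :=
    tan_nonneg_of_nonneg_of_le_pi_div_two (by linarith) (by linarith)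
  rw [one_sub_cos_eq_tan_half_mul_sin hcos.ne']
  exact mul_le_of_le_one_right htan (sin_le_one x)

theorem convexOn_tan : ConvexOn ℝ (Ico 0 (π / 2)) tan := by
  have hcos : ∀ x ∈ Ico 0 (π / 2), 0 < cos x := fun x hx =>
    cos_pos_of_mem_Ioo ⟨by linarith [hx.1, pi_pos], hx.2⟩
  refine MonotoneOn.convexOn_of_deriv (convex_Ico _ _)
    (fun x hx => (continuousAt_tan.2 (hcos x hx).ne').continuousWithinAt) ?_ ?_
  · rw [interior_Ico]
    exact fun x hx =>
      (differentiableAt_tan.2 (hcos x (Ioo_subset_Ico_self hx)).ne').differentiableWithinAt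
  · rw [interior_Ico]
    intro s hs t ht hst
    simp only [deriv_tan]
    have hcos_t := hcos t (Ioo_subset_Ico_self ht)
    have hcos_le : cos t ≤ cos s :=
      cos_le_cos_of_nonneg_of_le_pi hs.1.le (by linarith [ht.2, pi_pos]) hst
    gcongr

theorem tan_div_le_four_div_pi {y : ℝ} (h0 : 0 < y) (h : y ≤ π / 4) :
    tan y / y ≤ 4 / π := by
  have hπ := pi_pos
  have hmem : ∀ z, 0 ≤ z → z ≤ π / 4 → z ∈ Ico 0 (π / 2) := fun z hz _ =>
    ⟨hz, by linarith⟩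
  have hsecant := convexOn_tan.secant_mono (hmem 0 le_rfl (by positivity))
    (hmem y h0.le h) (hmem _ (by positivity) le_rfl) h0.ne' (by positivity) h
  simpa [tan_pi_div_four] using hsecant

end Real

theorem stmt0 (x : ℝ) (hx : 0 < x) (hx2 : x ≤ π/2) :
    (1 - Real.cos x)/x ≤ Real.tan (x/2)/x ∧ Real.tan (x/2)/x ≤ 2/π := by
  have hπ := pi_pos
  refine ⟨div_le_div_of_nonneg_right (one_sub_cos_le_tan_half hx.le (by linarith)) hx.le, ?_⟩
  calc tan (x / 2) / x = tan (x / 2) / (x / 2) / 2 := by field_simp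
    _ ≤ 4 / π / 2 := by
      gcongr ?_ / 2
      exact tan_div_le_four_div_pi (by linarith) (by linarith)
    _ = 2 / π := by ring
end

section
/- For all x in (0, π/2], 1/(π - x) ≤ tan(x/2)/x ≤ 2/π. -/
/-!
Both bounds compare slopes of secants through the origin, with `t = x / 2`. Since `sin` is
concave on `[0, π]`, `sin t / t` decreases, and comparing `t` with `π / 2 - t` gives
`cos t / (π / 2 - t) ≤ sin t / t`, the lower bound. Since `tan` is convex on `[0, π / 2)`,
`tan t / t` increases, and comparing `t` with `π / 4` gives the upper bound.
-/

open Real Set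

section SecantThroughOrigin

variable {𝕜 : Type*} [Field 𝕜] [LinearOrder 𝕜] [IsStrictOrderedRing 𝕜] {s : Set 𝕜} {f : 𝕜 → 𝕜}
  {x y : 𝕜}

theorem ConvexOn.div_le_div_of_map_zero (hf : ConvexOn 𝕜 s f) (h0 : 0 ∈ s) (hf0 : f 0 = 0)
    (hx : x ∈ s) (hy : y ∈ s) (hx0 : 0 < x) (hxy : x ≤ y) : f x / x ≤ f y / y := by
  simpa [hf0] using hf.secant_mono h0 hx hy hx0.ne' (hx0.trans_le hxy).ne' hxy

theorem ConcaveOn.div_le_div_of_map_zero (hf : ConcaveOn 𝕜 s f) (h0 : 0 ∈ s) (hf0 : f 0 = 0)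
    (hx : x ∈ s) (hy : y ∈ s) (hx0 : 0 < x) (hxy : x ≤ y) : f y / y ≤ f x / x := by
  simpa [neg_div] using hf.neg.div_le_div_of_map_zero h0 (by simp [hf0]) hx hy hx0 hxy

end SecantThroughOrigin

theorem Real.convexOn_tan_Ico : ConvexOn ℝ (Ico 0 (π / 2)) tan := by
  have hcos : ∀ y ∈ Ico 0 (π / 2), cos y ≠ 0 := fun y hy =>
    (cos_pos_of_mem_Ioo ⟨by linarith [hy.1, pi_pos], hy.2⟩).ne'
  refine MonotoneOn.convexOn_of_deriv (convex_Ico _ _)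
    (fun y hy => (continuousAt_tan.2 (hcos y hy)).continuousWithinAt)
    (fun y hy => (differentiableAt_tan.2 (hcos y (Ioo_subset_Ico_self (by simpa using hy)))
      ).differentiableWithinAt) ?_
  rw [interior_Ico]
  intro u hu v hv huv
  simp only [deriv_tan]
  have hcv : 0 < cos v := cos_pos_of_mem_Ioo ⟨by linarith [hv.1, pi_pos], hv.2⟩
  have hvu : cos v ≤ cos u :=
    cos_le_cos_of_nonneg_of_le_pi hu.1.le (by linarith [hv.2, pi_pos]) huv
  gcongr

theorem Real.tan_div_le_four_div_pi_s1 {t : ℝ} (ht : 0 < t) (ht4 : t ≤ π / 4) :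
    tan t / t ≤ 4 / π := by
  have h := convexOn_tan_Ico.div_le_div_of_map_zero (x := t) (y := π / 4)
    ⟨le_rfl, pi_div_two_pos⟩ tan_zero ⟨ht.le, by linarith [pi_pos]⟩
    ⟨by positivity, by linarith [pi_pos]⟩ ht ht4
  rwa [tan_pi_div_four, one_div_div] at h

theorem Real.cos_div_pi_div_two_sub_le_sin_div {t : ℝ} (ht : 0 < t) (ht4 : t ≤ π / 4) :
    cos t / (π / 2 - t) ≤ sin t / t := by
  have h := strictConcaveOn_sin_Icc.concaveOn.div_le_div_of_map_zero
    (x := t) (y := π / 2 - t) ⟨le_rfl, pi_pos.le⟩ sin_zero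
    ⟨ht.le, by linarith [pi_pos]⟩ ⟨by linarith, by linarith [pi_pos]⟩ ht (by linarith)
  rwa [sin_pi_div_two_sub] at h

theorem stmt1 (x : ℝ) (hx : 0 < x) (hx2 : x ≤ π/2) :
    1/(π - x) ≤ Real.tan (x/2)/x ∧ Real.tan (x/2)/x ≤ 2/π := by
  have ht : 0 < x / 2 := by positivity
  have ht4 : x / 2 ≤ π / 4 := by linarith
  have hcos : 0 < cos (x / 2) := cos_pos_of_mem_Ioo ⟨by linarith, by linarith⟩
  constructor
  · have h := cos_div_pi_div_two_sub_le_sin_div ht ht4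
    rw [div_le_div_iff₀ (by linarith) ht] at h
    rw [tan_eq_sin_div_cos, div_div, div_le_div_iff₀ (by linarith) (by positivity)]
    linarith
  · calc tan (x / 2) / x = tan (x / 2) / (x / 2) / 2 := by field_simp
      _ ≤ 4 / π / 2 := div_le_div_of_nonneg_right (tan_div_le_four_div_pi_s1 ht ht4) two_pos.le
      _ = 2 / π := by ring
end

section
/- The function q(x) = (1 - cos x)/x² is strictly decreasing and strictly concave on (0, π/2). -/
/-!
Write `q' = N₁ / x³` and `q'' = N₂ / x⁴` with `N₁ = x sin x + 2 cos x - 2` and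
`N₂ = x² cos x - 4 x sin x - 6 cos x + 6`. Both numerators vanish at `0`, and differentiating
twice gives `N₁'' = -x sin x` and `N₂'' = -x² cos x`, which are negative on `(0, π/2)`.
Two rounds of "vanishes at `0` with negative derivative, hence negative" make `N₁, N₂ < 0`.
-/

open Real Set

lemma neg_of_eq_zero_of_hasDerivAt_neg {F F' : ℝ → ℝ} {a b : ℝ}
    (hF : ∀ y, HasDerivAt F (F' y) y) (ha : F a = 0) (hF' : ∀ y ∈ Ioo a b, F' y < 0) :
    ∀ x ∈ Ioo a b, F x < 0 := by
  have hanti : StrictAntiOn F (Icc a b) :=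
    strictAntiOn_of_hasDerivWithinAt_neg (convex_Icc a b)
      (fun y _ => (hF y).continuousAt.continuousWithinAt)
      (fun y _ => (hF y).hasDerivWithinAt) (by rwa [interior_Icc])
  intro x hx
  exact ha ▸ hanti (left_mem_Icc.2 (hx.1.le.trans hx.2.le)) (Ioo_subset_Icc_self hx) hx.1

lemma strictAntiOn_of_hasDerivAt_neg {D : Set ℝ} (hD : Convex ℝ D) {f f' : ℝ → ℝ}
    (hf : ∀ x ∈ D, HasDerivAt f (f' x) x) (hf' : ∀ x ∈ D, f' x < 0) : StrictAntiOn f D :=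
  strictAntiOn_of_hasDerivWithinAt_neg hD
    (fun x hx => (hf x hx).continuousAt.continuousWithinAt)
    (fun x hx => (hf x (interior_subset hx)).hasDerivWithinAt)
    (fun x hx => hf' x (interior_subset hx))

lemma strictConcaveOn_of_hasDerivAt_of_hasDerivAt_neg {D : Set ℝ} (hD : Convex ℝ D)
    (hDo : IsOpen D) {f f' f'' : ℝ → ℝ} (hf : ∀ x ∈ D, HasDerivAt f (f' x) x)
    (hf' : ∀ x ∈ D, HasDerivAt f' (f'' x) x) (hf'' : ∀ x ∈ D, f'' x < 0) :
    StrictConcaveOn ℝ D f := by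
  refine StrictAntiOn.strictConcaveOn_of_deriv hD
    (fun x hx => (hf x hx).continuousAt.continuousWithinAt) ?_
  rw [hDo.interior_eq]
  exact (strictAntiOn_of_hasDerivAt_neg hD hf' hf'').congr fun x hx => ((hf x hx).deriv).symm

lemma hasDerivAt_mul_sin_add_two_mul_cos_sub_two (x : ℝ) :
    HasDerivAt (fun x => x * sin x + 2 * cos x - 2) (x * cos x - sin x) x :=
  (((hasDerivAt_id' x).mul (hasDerivAt_sin x)).add ((hasDerivAt_cos x).const_mul 2)).sub_const 2
    |>.congr_deriv (by ring)

lemma mul_sin_add_two_mul_cos_sub_two_neg :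
    ∀ x ∈ Ioo 0 π, x * sin x + 2 * cos x - 2 < 0 := by
  have hderiv (y : ℝ) : HasDerivAt (fun y => y * cos y - sin y) (-(y * sin y)) y :=
    ((hasDerivAt_id' y).mul (hasDerivAt_cos y)).sub (hasDerivAt_sin y) |>.congr_deriv (by ring)
  have hderiv_neg : ∀ y ∈ Ioo 0 π, y * cos y - sin y < 0 :=
    neg_of_eq_zero_of_hasDerivAt_neg hderiv (by simp)
      (fun z hz => neg_neg_of_pos (mul_pos hz.1 (sin_pos_of_pos_of_lt_pi hz.1 hz.2)))
  exact neg_of_eq_zero_of_hasDerivAt_neg hasDerivAt_mul_sin_add_two_mul_cos_sub_two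
    (by simp) hderiv_neg

lemma sq_mul_cos_sub_four_mul_sin_sub_six_mul_cos_add_six_neg :
    ∀ x ∈ Ioo 0 (π / 2), x ^ 2 * cos x - 4 * x * sin x - 6 * cos x + 6 < 0 := by
  have hderiv (y : ℝ) : HasDerivAt (fun y => y ^ 2 * cos y - 4 * y * sin y - 6 * cos y + 6)
      (2 * sin y - 2 * y * cos y - y ^ 2 * sin y) y :=
    ((((hasDerivAt_pow 2 y).mul (hasDerivAt_cos y)).sub
      (((hasDerivAt_id' y).const_mul 4).mul (hasDerivAt_sin y))).sub
      ((hasDerivAt_cos y).const_mul 6)).add_const 6 |>.congr_deriv (by ring)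
  have hderiv2 (y : ℝ) : HasDerivAt (fun y => 2 * sin y - 2 * y * cos y - y ^ 2 * sin y)
      (-(y ^ 2 * cos y)) y :=
    (((hasDerivAt_sin y).const_mul 2).sub
      (((hasDerivAt_id' y).const_mul 2).mul (hasDerivAt_cos y))).sub
      ((hasDerivAt_pow 2 y).mul (hasDerivAt_sin y)) |>.congr_deriv (by ring)
  have hderiv_neg : ∀ y ∈ Ioo 0 (π / 2), 2 * sin y - 2 * y * cos y - y ^ 2 * sin y < 0 :=
    neg_of_eq_zero_of_hasDerivAt_neg hderiv2 (by simp)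
      (fun z hz => neg_neg_of_pos (mul_pos (pow_pos hz.1 2)
        (cos_pos_of_mem_Ioo ⟨by linarith [hz.1, pi_pos], hz.2⟩)))
  exact neg_of_eq_zero_of_hasDerivAt_neg hderiv (by simp) hderiv_neg

lemma hasDerivAt_one_sub_cos_div_sq {x : ℝ} (hx : x ≠ 0) :
    HasDerivAt (fun x => (1 - cos x) / x ^ 2) ((x * sin x + 2 * cos x - 2) / x ^ 3) x :=
  ((hasDerivAt_cos x).const_sub 1).div (hasDerivAt_pow 2 x)
    (pow_ne_zero 2 hx) |>.congr_deriv (by field_simp; ring)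

lemma hasDerivAt_mul_sin_add_two_mul_cos_sub_two_div_cube {x : ℝ} (hx : x ≠ 0) :
    HasDerivAt (fun x => (x * sin x + 2 * cos x - 2) / x ^ 3)
      ((x ^ 2 * cos x - 4 * x * sin x - 6 * cos x + 6) / x ^ 4) x :=
  (hasDerivAt_mul_sin_add_two_mul_cos_sub_two x).div (hasDerivAt_pow 3 x)
    (pow_ne_zero 3 hx) |>.congr_deriv (by field_simp; ring)

theorem stmt3 :
    StrictAntiOn (fun x : ℝ => (1 - Real.cos x)/x^2) (Set.Ioo 0 (π/2)) ∧
    StrictConcaveOn ℝ (Set.Ioo 0 (π/2)) (fun x : ℝ => (1 - Real.cos x)/x^2) := by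
  have hq : ∀ x ∈ Ioo 0 (π / 2),
      HasDerivAt (fun x => (1 - cos x) / x ^ 2) ((x * sin x + 2 * cos x - 2) / x ^ 3) x :=
    fun x hx => hasDerivAt_one_sub_cos_div_sq hx.1.ne'
  have hq'_neg : ∀ x ∈ Ioo 0 (π / 2), (x * sin x + 2 * cos x - 2) / x ^ 3 < 0 :=
    fun x hx => div_neg_of_neg_of_pos
      (mul_sin_add_two_mul_cos_sub_two_neg x ⟨hx.1, hx.2.trans (half_lt_self pi_pos)⟩)
      (pow_pos hx.1 3)
  exact ⟨strictAntiOn_of_hasDerivAt_neg (convex_Ioo _ _) hq hq'_neg,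
    strictConcaveOn_of_hasDerivAt_of_hasDerivAt_neg (convex_Ioo _ _) isOpen_Ioo hq
      (fun x hx => hasDerivAt_mul_sin_add_two_mul_cos_sub_two_div_cube hx.1.ne')
      (fun x hx => div_neg_of_neg_of_pos
        (sq_mul_cos_sub_four_mul_sin_sub_six_mul_cos_add_six_neg x hx) (pow_pos hx.1 4))⟩
end

section
/- The function f(x) = tan(x/2)/x, extended by f(0) = 1/2, is strictly increasing and strictly convex on [0, π/2]. -/
/-!
Substituting `u = x / 2` writes the function as `x ↦ g (x / 2) / 2` with `g u = tan u / u`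
(`= sinc u / cos u`, which is continuous at `0`), so it suffices to show that `g` is strictly
increasing and strictly convex on `[0, π / 2)`. With `t = tan u` and `tan' = 1 + tan ^ 2`,
`g' = ((1 + t²) u - t) / u²`, positive because `(1 + t²) u - t = (u - sin u cos u) / cos² u`, and
`g'' = 2 (t (1 + t²) u² - (1 + t²) u + t) / u³`, whose numerator is a quadratic in `u` that is
positive for `0 < u < t`, and indeed `u < tan u`.
-/

open Real Set Filter Topology

lemma hasDerivAt_tan_eq_one_add_tan_sq {u : ℝ} (hu : cos u ≠ 0) :
    HasDerivAt tan (1 + tan u ^ 2) u := by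
  convert hasDerivAt_tan hu using 1
  rw [← inv_one_add_tan_sq hu, one_div, inv_inv]

lemma hasDerivAt_tan_div_self_deriv {u : ℝ} (hu : u ≠ 0) (hc : cos u ≠ 0) :
    HasDerivAt (fun v => ((1 + tan v ^ 2) * v - tan v) / v ^ 2)
      (2 * (tan u * (1 + tan u ^ 2) * u ^ 2 - (1 + tan u ^ 2) * u + tan u) / u ^ 3) u := by
  have ht := hasDerivAt_tan_eq_one_add_tan_sq hc
  have h := ((((ht.pow 2).const_add 1).mul (hasDerivAt_id u)).sub ht).div (hasDerivAt_pow 2 u)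
    (pow_ne_zero 2 hu)
  refine h.congr_deriv ?_
  simp only [Pi.mul_apply, Pi.sub_apply, Pi.pow_apply, id]
  field_simp
  ring

lemma tan_lt_one_add_tan_sq_mul {u : ℝ} (hu0 : 0 < u) (hu : u < π / 2) :
    tan u < (1 + tan u ^ 2) * u := by
  have hc : 0 < cos u := cos_pos_of_mem_Ioo ⟨by linarith, hu⟩
  have hsin : sin (2 * u) < 2 * u := sin_lt (by positivity)
  have key : (1 + tan u ^ 2) * u - tan u = (u - sin u * cos u) / cos u ^ 2 := by
    rw [tan_eq_sin_div_cos]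
    field_simp
    linear_combination u * sin_sq_add_cos_sq u
  rw [sin_two_mul] at hsin
  rw [← sub_pos, key]
  exact div_pos (by linarith) (by positivity)

lemma mul_one_add_sq_mul_sq_sub_add_pos {u t : ℝ} (hu : 0 < u) (hut : u < t) :
    0 < t * (1 + t ^ 2) * u ^ 2 - (1 + t ^ 2) * u + t := by
  have ht : 0 < t := hu.trans hut
  rcases le_or_gt (3 * t ^ 2) 1 with hsmall | hlarge
  -- the quadratic equals `t ^ 5 + (1 + t ^ 2) (t - u) (1 - t (u + t))`
  · nlinarith [pow_pos ht 5, mul_pos (sub_pos.2 hut) (show 0 < 1 - t * (u + t) by nlinarith)]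
  -- its discriminant `(1 + t ^ 2) (1 - 3 t ^ 2)` is negative
  · refine pos_of_mul_pos_right (a := 4 * t * (1 + t ^ 2)) ?_ (by positivity)
    nlinarith [sq_nonneg (2 * t * (1 + t ^ 2) * u - (1 + t ^ 2))]

lemma sinc_div_cos_of_ne_zero {u : ℝ} (hu : u ≠ 0) : sinc u / cos u = tan u / u := by
  rw [sinc_of_ne_zero hu, tan_eq_sin_div_cos, div_right_comm]

lemma cos_ne_zero_of_mem_Ico {u : ℝ} (hu : u ∈ Ico 0 (π / 2)) : cos u ≠ 0 :=
  (cos_pos_of_mem_Ioo ⟨by linarith [hu.1, pi_pos], hu.2⟩).ne'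

lemma continuousOn_sinc_div_cos : ContinuousOn (fun u => sinc u / cos u) (Ico 0 (π / 2)) :=
  continuous_sinc.continuousOn.div continuous_cos.continuousOn fun _ => cos_ne_zero_of_mem_Ico

lemma hasDerivAt_sinc_div_cos {u : ℝ} (hu : u ≠ 0) (hc : cos u ≠ 0) :
    HasDerivAt (fun v => sinc v / cos v) (((1 + tan u ^ 2) * u - tan u) / u ^ 2) u := by
  have h := (hasDerivAt_tan_eq_one_add_tan_sq hc).div (hasDerivAt_id u) hu
  refine (h.congr_deriv (by simp)).congr_of_eventuallyEq ?_
  filter_upwards [eventually_ne_nhds hu] with v hv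
  exact sinc_div_cos_of_ne_zero hv

theorem strictMonoOn_sinc_div_cos : StrictMonoOn (fun u => sinc u / cos u) (Ico 0 (π / 2)) := by
  refine strictMonoOn_of_deriv_pos (convex_Ico _ _) continuousOn_sinc_div_cos fun u hu => ?_
  rw [interior_Ico] at hu
  rw [(hasDerivAt_sinc_div_cos hu.1.ne' (cos_ne_zero_of_mem_Ico (Ioo_subset_Ico_self hu))).deriv]
  exact div_pos (sub_pos.2 (tan_lt_one_add_tan_sq_mul hu.1 hu.2)) (pow_pos hu.1 2)

theorem strictConvexOn_sinc_div_cos :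
    StrictConvexOn ℝ (Ico 0 (π / 2)) (fun u => sinc u / cos u) := by
  refine strictConvexOn_of_deriv2_pos (convex_Ico _ _) continuousOn_sinc_div_cos fun u hu => ?_
  rw [interior_Ico] at hu
  have hderiv : deriv (fun v => sinc v / cos v) =ᶠ[𝓝 u]
      fun v => ((1 + tan v ^ 2) * v - tan v) / v ^ 2 := by
    filter_upwards [isOpen_Ioo.mem_nhds hu] with v hv
    exact (hasDerivAt_sinc_div_cos hv.1.ne'
      (cos_ne_zero_of_mem_Ico (Ioo_subset_Ico_self hv))).deriv
  rw [Function.iterate_succ_apply, Function.iterate_one, hderiv.deriv_eq,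
    (hasDerivAt_tan_div_self_deriv hu.1.ne'
      (cos_ne_zero_of_mem_Ico (Ioo_subset_Ico_self hu))).deriv]
  have hnum := mul_one_add_sq_mul_sq_sub_add_pos hu.1 (lt_tan hu.1 hu.2)
  exact div_pos (mul_pos two_pos hnum) (pow_pos hu.1 3)

theorem StrictConvexOn.const_mul_comp_mul {t : Set ℝ} {g : ℝ → ℝ} (hg : StrictConvexOn ℝ t g)
    {a c : ℝ} (ha : 0 < a) (hc : c ≠ 0) :
    StrictConvexOn ℝ ((c * ·) ⁻¹' t) (fun x => a * g (c * x)) := by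
  refine ⟨hg.1.is_linear_preimage (IsLinearMap.isLinearMap_smul c), ?_⟩
  intro x hx y hy hxy p q hp hq hpq
  have h := hg.2 hx hy ((mul_right_injective₀ hc).ne hxy) hp hq hpq
  simp only [smul_eq_mul] at h ⊢
  calc a * g (c * (p * x + q * y)) = a * g (p * (c * x) + q * (c * y)) := by
        rw [mul_add, mul_left_comm c p, mul_left_comm c q]
    _ < a * (p * g (c * x) + q * g (c * y)) := mul_lt_mul_of_pos_left h ha
    _ = p * (a * g (c * x)) + q * (a * g (c * y)) := by ring

theorem stmt4 :
    StrictMonoOn (fun x : ℝ => if x = 0 then 1/2 else Real.tan (x/2)/x) (Set.Icc 0 (π/2)) ∧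
    StrictConvexOn ℝ (Set.Icc 0 (π/2)) (fun x : ℝ => if x = 0 then 1/2 else Real.tan (x/2)/x) := by
  have hf : (fun x : ℝ => if x = 0 then 1/2 else Real.tan (x/2)/x) =
      fun x => 2⁻¹ * (sinc (2⁻¹ * x) / cos (2⁻¹ * x)) := by
    ext x
    rcases eq_or_ne x 0 with rfl | hx
    · norm_num
    · rw [if_neg hx, sinc_of_ne_zero (by positivity), tan_eq_sin_div_cos, div_eq_inv_mul x]
      ring
  have hhalf : StrictMono fun x : ℝ => 2⁻¹ * x := strictMono_mul_left_of_pos (by norm_num)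
  have hmaps : MapsTo (fun x : ℝ => 2⁻¹ * x) (Icc 0 (π / 2)) (Ico 0 (π / 2)) :=
    fun x hx => ⟨by linarith [hx.1], by linarith [hx.2, pi_pos]⟩
  rw [hf]
  exact ⟨hhalf.comp_strictMonoOn (strictMonoOn_sinc_div_cos.comp (hhalf.strictMonoOn _) hmaps),
    (strictConvexOn_sinc_div_cos.const_mul_comp_mul (by norm_num) (by norm_num)).subset hmaps
      (convex_Icc _ _)⟩
end

section
/- For all x in (0, π/2), 1/(1 + cos(x/2)) < tan(x/2)/x < (1 + 1/cos²(x/2))/4. -/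
open Real Set

/-!
Writing `t = x / 2`, the two inequalities are `2 t < sin t + tan t` and
`2 tan t < t (1 + 1 / cos² t)`. In each case the difference of the two sides vanishes at `0`
and, on `(0, π/2)`, has the positive derivative `(1 - cos t)(1 + cos t - cos² t) / cos² t`,
resp. `sin t (2 t - sin t cos t) / cos³ t`.
-/

lemma lt_of_hasDerivAt_pos {f f' : ℝ → ℝ} {a b : ℝ} (hab : a < b)
    (hf : ∀ x ∈ Icc a b, HasDerivAt f (f' x) x) (hf' : ∀ x ∈ Ioo a b, 0 < f' x) :
    f a < f b :=
  strictMonoOn_of_hasDerivWithinAt_pos (convex_Icc a b)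
    (fun x hx ↦ (hf x hx).continuousAt.continuousWithinAt)
    (fun x hx ↦ (hf x (interior_subset hx)).hasDerivWithinAt)
    (by simpa only [interior_Icc] using hf') (left_mem_Icc.2 hab.le) (right_mem_Icc.2 hab.le) hab

lemma hasDerivAt_sin_add_tan_sub_two_mul {x : ℝ} (hx : cos x ≠ 0) :
    HasDerivAt (fun x ↦ sin x + tan x - 2 * x)
      ((1 - cos x) * (1 + cos x - cos x ^ 2) / cos x ^ 2) x := by
  refine (((hasDerivAt_sin x).fun_add (hasDerivAt_tan hx)).fun_sub
    ((hasDerivAt_id' x).const_mul 2)).congr_deriv ?_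
  field_simp
  ring

lemma hasDerivAt_one_div_cos_sq {x : ℝ} (hx : cos x ≠ 0) :
    HasDerivAt (fun x ↦ 1 / cos x ^ 2) (2 * sin x / cos x ^ 3) x := by
  simp only [one_div]
  refine (((hasDerivAt_cos x).fun_pow 2).fun_inv (pow_ne_zero 2 hx)).congr_deriv ?_
  field_simp
  ring

lemma hasDerivAt_mul_one_add_one_div_cos_sq_sub_two_mul_tan {x : ℝ} (hx : cos x ≠ 0) :
    HasDerivAt (fun x ↦ x * (1 + 1 / cos x ^ 2) - 2 * tan x)
      (sin x * (2 * x - sin x * cos x) / cos x ^ 3) x := by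
  refine (((hasDerivAt_id' x).fun_mul ((hasDerivAt_const x 1).fun_add
    (hasDerivAt_one_div_cos_sq hx))).fun_sub ((hasDerivAt_tan hx).const_mul 2)).congr_deriv ?_
  field_simp
  linear_combination cos x * sin_sq_add_cos_sq x

theorem two_mul_lt_sin_add_tan {x : ℝ} (hx : 0 < x) (hx' : x < π / 2) :
    2 * x < sin x + tan x := by
  have key := lt_of_hasDerivAt_pos hx
    (fun y hy ↦ hasDerivAt_sin_add_tan_sub_two_mul
      (cos_pos_of_mem_Ioo ⟨by linarith [pi_pos, hy.1], by linarith [hy.2]⟩).ne')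
    (fun y hy ↦ by
      have hc : 0 < cos y := cos_pos_of_mem_Ioo ⟨by linarith [pi_pos, hy.1], by linarith [hy.2]⟩
      have hs : 0 < sin y := sin_pos_of_pos_of_lt_pi hy.1 (by linarith [pi_pos, hy.2])
      have hc1 : cos y < 1 := by nlinarith [sin_sq_add_cos_sq y, cos_le_one y]
      exact div_pos (mul_pos (by linarith) (by nlinarith)) (by positivity))
  simpa [sub_pos] using key

theorem two_mul_tan_lt_mul_one_add_one_div_cos_sq {x : ℝ} (hx : 0 < x) (hx' : x < π / 2) :
    2 * tan x < x * (1 + 1 / cos x ^ 2) := by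
  have key := lt_of_hasDerivAt_pos hx
    (fun y hy ↦ hasDerivAt_mul_one_add_one_div_cos_sq_sub_two_mul_tan
      (cos_pos_of_mem_Ioo ⟨by linarith [pi_pos, hy.1], by linarith [hy.2]⟩).ne')
    (fun y hy ↦ by
      have hc : 0 < cos y := cos_pos_of_mem_Ioo ⟨by linarith [pi_pos, hy.1], by linarith [hy.2]⟩
      have hs : 0 < sin y := sin_pos_of_pos_of_lt_pi hy.1 (by linarith [pi_pos, hy.2])
      have : sin y * cos y < 2 * y := by nlinarith [sin_lt hy.1, cos_le_one y]
      exact div_pos (mul_pos hs (by linarith)) (by positivity))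
  simpa [sub_pos] using key

theorem stmt6 (x : ℝ) (hx : 0 < x) (hx2 : x < π/2) :
    1/(1 + Real.cos (x/2)) < Real.tan (x/2)/x ∧
    Real.tan (x/2)/x < (1 + 1/(Real.cos (x/2))^2)/4 := by
  have ht : 0 < x / 2 := by positivity
  have ht' : x / 2 < π / 2 := by linarith
  have hc : 0 < cos (x / 2) := cos_pos_of_mem_Ioo ⟨by linarith, ht'⟩
  constructor
  · rw [div_lt_div_iff₀ (by positivity) hx, mul_one_add, tan_mul_cos hc.ne']
    linarith [two_mul_lt_sin_add_tan ht ht']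
  · rw [div_lt_iff₀ hx]
    linarith [two_mul_tan_lt_mul_one_add_one_div_cos_sq ht ht']
end

section
/- For all x in (0, π/2), cos x · cosh x < 1. -/
/-!
The derivative of `cos y * cosh y` is `cos y * sinh y - sin y * cosh y`, which vanishes at `0`
and has derivative `-2 * sin y * sinh y < 0` on `(0, π)`. Hence it is negative on `(0, π]`, so
`cos y * cosh y` strictly decreases on `[0, π]` from its value `1` at `0`.
-/

open Real Set

namespace Real

theorem hasDerivAt_cos_mul_cosh (x : ℝ) :
    HasDerivAt (fun y => cos y * cosh y) (cos x * sinh x - sin x * cosh x) x :=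
  ((hasDerivAt_cos x).mul (hasDerivAt_cosh x)).congr_deriv (by ring)

theorem hasDerivAt_cos_mul_sinh_sub_sin_mul_cosh (x : ℝ) :
    HasDerivAt (fun y => cos y * sinh y - sin y * cosh y) (-2 * (sin x * sinh x)) x :=
  (((hasDerivAt_cos x).mul (hasDerivAt_sinh x)).sub
    ((hasDerivAt_sin x).mul (hasDerivAt_cosh x))).congr_deriv (by ring)

theorem strictAntiOn_cos_mul_sinh_sub_sin_mul_cosh :
    StrictAntiOn (fun y => cos y * sinh y - sin y * cosh y) (Icc 0 π) := by
  refine strictAntiOn_of_deriv_neg (convex_Icc 0 π) (by fun_prop) fun y hy => ?_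
  rw [interior_Icc] at hy
  rw [(hasDerivAt_cos_mul_sinh_sub_sin_mul_cosh y).deriv, neg_mul, neg_lt_zero]
  exact mul_pos two_pos (mul_pos (sin_pos_of_pos_of_lt_pi hy.1 hy.2) (sinh_pos_iff.mpr hy.1))

theorem cos_mul_sinh_sub_sin_mul_cosh_neg {x : ℝ} (hx : 0 < x) (hxπ : x ≤ π) :
    cos x * sinh x - sin x * cosh x < 0 := by
  simpa using strictAntiOn_cos_mul_sinh_sub_sin_mul_cosh
    (left_mem_Icc.mpr pi_pos.le) ⟨hx.le, hxπ⟩ hx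

theorem strictAntiOn_cos_mul_cosh : StrictAntiOn (fun y => cos y * cosh y) (Icc 0 π) := by
  refine strictAntiOn_of_deriv_neg (convex_Icc 0 π) (by fun_prop) fun y hy => ?_
  rw [interior_Icc] at hy
  rw [(hasDerivAt_cos_mul_cosh y).deriv]
  exact cos_mul_sinh_sub_sin_mul_cosh_neg hy.1 hy.2.le

theorem cos_mul_cosh_lt_one {x : ℝ} (hx : 0 < x) (hxπ : x ≤ π) : cos x * cosh x < 1 := by
  simpa using strictAntiOn_cos_mul_cosh (left_mem_Icc.mpr pi_pos.le) ⟨hx.le, hxπ⟩ hx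

end Real

theorem stmt9 (x : ℝ) (hx : 0 < x) (hx2 : x < π/2) :
    Real.cos x * Real.cosh x < 1 :=
  cos_mul_cosh_lt_one hx (hx2.le.trans (half_le_self pi_pos.le))
end

section
/- For all x in (0, π/2), sin x · sinh x < x². -/
/-! Put `f(t) = t² - sin t sinh t`. Then `f(0) = f'(0) = 0` and `f''(t) = 2 - 2 cos t cosh t`,
so it suffices that `cos t cosh t < 1` on `(0, π/2]`. That product equals `1` at `0` and
decreases, because its derivative `cos t sinh t - sin t cosh t` is negative exactly when
`tanh t < tan t`, which follows from `tanh t < t < tan t`. -/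

open Real Set

lemma pos_of_hasDerivAt_of_pos_on_Ioo {f f' : ℝ → ℝ} {x : ℝ}
    (hf : ∀ t, HasDerivAt f (f' t) t) (h0 : f 0 = 0) (hx : 0 < x)
    (hf' : ∀ t ∈ Ioo 0 x, 0 < f' t) : 0 < f x := by
  have hmono : StrictMonoOn f (Icc 0 x) :=
    strictMonoOn_of_hasDerivWithinAt_pos (convex_Icc 0 x)
      (fun t _ ↦ (hf t).continuousAt.continuousWithinAt)
      (fun t _ ↦ (hf t).hasDerivWithinAt)
      (by simpa only [interior_Icc] using hf')
  simpa only [h0] using hmono (left_mem_Icc.2 hx.le) (right_mem_Icc.2 hx.le) hx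

lemma sinh_lt_mul_cosh {x : ℝ} (hx : 0 < x) : sinh x < x * cosh x :=
  sub_pos.1 <| pos_of_hasDerivAt_of_pos_on_Ioo (f := fun t ↦ t * cosh t - sinh t)
    (f' := fun t ↦ t * sinh t)
    (fun t ↦ (((hasDerivAt_id' t).mul (hasDerivAt_cosh t)).sub
      (hasDerivAt_sinh t)).congr_deriv (by ring))
    (by simp) hx (fun t ht ↦ mul_pos ht.1 (sinh_pos_iff.2 ht.1))

lemma mul_cos_lt_sin {x : ℝ} (hx : 0 < x) (hx2 : x < π / 2) : x * cos x < sin x := by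
  have hcos : 0 < cos x := cos_pos_of_mem_Ioo ⟨by linarith, hx2⟩
  rw [← lt_div_iff₀ hcos, ← tan_eq_sin_div_cos]
  exact lt_tan hx hx2

lemma cos_mul_sinh_lt_sin_mul_cosh {x : ℝ} (hx : 0 < x) (hx2 : x < π / 2) :
    cos x * sinh x < sin x * cosh x :=
  calc cos x * sinh x < cos x * (x * cosh x) :=
        mul_lt_mul_of_pos_left (sinh_lt_mul_cosh hx) (cos_pos_of_mem_Ioo ⟨by linarith, hx2⟩)
    _ = x * cos x * cosh x := by ring
    _ < sin x * cosh x := mul_lt_mul_of_pos_right (mul_cos_lt_sin hx hx2) (cosh_pos x)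

lemma cos_mul_cosh_lt_one {x : ℝ} (hx : 0 < x) (hx2 : x ≤ π / 2) : cos x * cosh x < 1 :=
  sub_pos.1 <| pos_of_hasDerivAt_of_pos_on_Ioo (f := fun t ↦ 1 - cos t * cosh t)
    (f' := fun t ↦ sin t * cosh t - cos t * sinh t)
    (fun t ↦ (((hasDerivAt_cos t).mul (hasDerivAt_cosh t)).const_sub 1).congr_deriv (by ring))
    (by simp) hx
    (fun t ht ↦ sub_pos.2 (cos_mul_sinh_lt_sin_mul_cosh ht.1 (ht.2.trans_le hx2)))

lemma cos_mul_sinh_add_sin_mul_cosh_lt_two_mul {x : ℝ} (hx : 0 < x) (hx2 : x ≤ π / 2) :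
    cos x * sinh x + sin x * cosh x < 2 * x :=
  sub_pos.1 <| pos_of_hasDerivAt_of_pos_on_Ioo
    (f := fun t ↦ 2 * t - (cos t * sinh t + sin t * cosh t))
    (f' := fun t ↦ 2 - 2 * (cos t * cosh t))
    (fun t ↦ (((hasDerivAt_id' t).const_mul 2).sub
        (((hasDerivAt_cos t).mul (hasDerivAt_sinh t)).add
          ((hasDerivAt_sin t).mul (hasDerivAt_cosh t)))).congr_deriv (by ring))
    (by simp) hx
    (fun t ht ↦ by linarith [cos_mul_cosh_lt_one ht.1 (ht.2.le.trans hx2)])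

theorem stmt10 (x : ℝ) (hx : 0 < x) (hx2 : x < π/2) :
    Real.sin x * Real.sinh x < x^2 :=
  sub_pos.1 <| pos_of_hasDerivAt_of_pos_on_Ioo (f := fun t ↦ t ^ 2 - sin t * sinh t)
    (f' := fun t ↦ 2 * t - (cos t * sinh t + sin t * cosh t))
    (fun t ↦ ((hasDerivAt_pow 2 t).sub
      ((hasDerivAt_sin t).mul (hasDerivAt_sinh t))).congr_deriv (by ring))
    (by simp) hx
    (fun t ht ↦ sub_pos.2 (cos_mul_sinh_add_sin_mul_cosh_lt_two_mul ht.1 (ht.2.trans hx2).le))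
end

section
/- Let f : I → J be a bijection between subsets of (0, ∞) such that x ↦ f(x)/x is strictly increasing on I. Then for any x ∈ I and y ∈ J with f(x) ≥ y, one has f(x)·f⁻¹(y) ≥ x·y; and if f(x) ≤ y, then f(x)·f⁻¹(y) ≤ x·y. -/
/-! Since `f x = x * (f x / x)` is a product of nonnegative increasing factors, `f` is strictly
increasing on `I`. Hence with `z = f⁻¹ y`, the comparison of `y = f z` with `f x` is the comparison
of `z` with `x`, and monotonicity of `f x / x` then compares `y / z` with `f x / x`. -/

open Real

section DivSelfMono

variable {I : Set ℝ} {f : ℝ → ℝ}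

theorem strictMonoOn_of_strictMonoOn_div_self (hI : I ⊆ Set.Ioi 0) (hf : ∀ x ∈ I, 0 ≤ f x)
    (hg : StrictMonoOn (fun x => f x / x) I) : StrictMonoOn f I := by
  intro a ha b hb hab
  have hdiv : 0 ≤ f a / a := div_nonneg (hf a ha) (hI ha).le
  calc f a = a * (f a / a) := (mul_div_cancel₀ _ (hI ha).ne').symm
    _ < b * (f b / b) := mul_lt_mul'' hab (hg ha hb hab) (hI ha).le hdiv
    _ = f b := mul_div_cancel₀ _ (hI hb).ne'

theorem apply_mul_le_apply_mul_of_strictMonoOn_div_self (hI : I ⊆ Set.Ioi 0)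
    (hf : ∀ x ∈ I, 0 ≤ f x) (hg : StrictMonoOn (fun x => f x / x) I) {a b : ℝ}
    (ha : a ∈ I) (hb : b ∈ I) (hab : f a ≤ f b) : f a * b ≤ f b * a := by
  have hle : a ≤ b := ((strictMonoOn_of_strictMonoOn_div_self hI hf hg).le_iff_le ha hb).1 hab
  exact (div_le_div_iff₀ (hI ha) (hI hb)).1 (hg.monotoneOn ha hb hle)

end DivSelfMono

theorem stmt13 (I J : Set ℝ) (hI : I ⊆ Set.Ioi 0) (hJ : J ⊆ Set.Ioi 0)
    (f finv : ℝ → ℝ) (hbij : Set.BijOn f I J)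
    (hinv : Set.InvOn finv f I J)
    (hg : StrictMonoOn (fun x => f x / x) I) :
    ∀ x ∈ I, ∀ y ∈ J,
      (y ≤ f x → x * y ≤ f x * finv y) ∧ (f x ≤ y → f x * finv y ≤ x * y) := by
  intro x hx y hy
  obtain ⟨z, hz, rfl⟩ := hbij.surjOn hy
  have hf : ∀ x ∈ I, 0 ≤ f x := fun x hx => (hJ (hbij.mapsTo hx)).le
  rw [hinv.1 hz]
  constructor
  · intro hzx
    rw [mul_comm]
    exact apply_mul_le_apply_mul_of_strictMonoOn_div_self hI hf hg hz hx hzx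
  · intro hxz
    rw [mul_comm x]
    exact apply_mul_le_apply_mul_of_strictMonoOn_div_self hI hf hg hx hz hxz
end

section
/- For all x in (0, π/2), sin x > tanh x. -/
/-! The Gudermannian `gd x = arctan (sinh x)` satisfies `sin (gd x) = tanh x`, and since
`gd' = 1 / cosh < 1` away from `0` we have `gd x < x` for `x > 0`. As `sin` is increasing on
`[-π/2, π/2]`, which contains both `gd x` and `x`, this gives `tanh x = sin (gd x) < sin x`. -/

open Real

namespace Real

noncomputable def gudermannian (x : ℝ) : ℝ := arctan (sinh x)

theorem hasDerivAt_gudermannian (x : ℝ) : HasDerivAt gudermannian (cosh x)⁻¹ x := by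
  refine ((hasDerivAt_arctan (sinh x)).comp x (hasDerivAt_sinh x)).congr_deriv ?_
  rw [← cosh_sq']
  field_simp [(cosh_pos x).ne']

theorem continuous_gudermannian : Continuous gudermannian :=
  continuous_arctan.comp continuous_sinh

theorem sin_gudermannian (x : ℝ) : sin (gudermannian x) = tanh x := by
  rw [gudermannian, sin_arctan, tanh_eq_sinh_div_cosh, ← cosh_sq', sqrt_sq (cosh_pos x).le]

theorem gudermannian_mem_Ioo (x : ℝ) : gudermannian x ∈ Set.Ioo (-(π / 2)) (π / 2) :=
  ⟨neg_pi_div_two_lt_arctan _, arctan_lt_pi_div_two _⟩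

theorem strictMonoOn_sub_gudermannian :
    StrictMonoOn (fun x => x - gudermannian x) (Set.Ici 0) := by
  refine strictMonoOn_of_deriv_pos (convex_Ici 0)
    (continuous_id.sub continuous_gudermannian).continuousOn fun x hx => ?_
  rw [interior_Ici] at hx
  rw [((hasDerivAt_id' x).fun_sub (hasDerivAt_gudermannian x)).deriv, sub_pos]
  exact inv_lt_one_of_one_lt₀ (one_lt_cosh.mpr (ne_of_gt hx))

theorem gudermannian_lt_self {x : ℝ} (hx : 0 < x) : gudermannian x < x := by
  have h := strictMonoOn_sub_gudermannian Set.self_mem_Ici hx.le hx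
  simpa [gudermannian] using h

end Real

theorem stmt14 (x : ℝ) (hx : 0 < x) (hx2 : x < π/2) :
    Real.sin x > Real.tanh x := by
  rw [← sin_gudermannian]
  have hgd := gudermannian_mem_Ioo x
  exact strictMonoOn_sin ⟨hgd.1.le, hgd.2.le⟩ ⟨by linarith [pi_pos], hx2.le⟩ (gudermannian_lt_self hx)
end

section
/- For positive reals a ≠ b, with A = (a+b)/2, G = √(ab), and L = (a-b)/(ln a - ln b) the logarithmic mean, one has L²·A + L·G² > 2·A·G² and 2·L·A + L·G > 3·A·G. -/
/-!
Write `a = e^(m+s)` and `b = e^(m-s)` with `s ≠ 0`. Then `G = e^m`, `A = e^m cosh s` and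
`L = e^m sinh s / s`, so the Leach–Sholander inequality `G²A < L³` is `cosh s < (sinh s / s)³`.
For `s > 0` this holds because `s ↦ sinh s · (cosh s)^(-1/3) - s` vanishes at `0` and is
increasing. Both claimed inequalities are algebraic consequences of `G²A < L³`: the first since
`L (L²A + LG² - 2AG²) > G²(A - L)²`, the second after cubing, by AM-GM `27A²G ≤ (2A + G)³`.
-/

open Real

lemma rpow_neg_third_pow_three_mul_self {c : ℝ} (hc : 0 < c) :
    (c ^ (-(1 / 3) : ℝ)) ^ 3 * c = 1 := by
  rw [← rpow_natCast, ← rpow_mul hc.le]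
  norm_num [rpow_neg_one, hc.ne']

lemma three_mul_lt_rpow_neg_third_mul {c : ℝ} (hc : 1 < c) :
    3 * c < c ^ (-(1 / 3) : ℝ) * (2 * c ^ 2 + 1) := by
  have hvc := rpow_neg_third_pow_three_mul_self (zero_lt_one.trans hc)
  have hv : 0 < c ^ (-(1 / 3) : ℝ) := rpow_pos_of_pos (zero_lt_one.trans hc) _
  generalize c ^ (-(1 / 3) : ℝ) = v at hv hvc ⊢
  have hv1 : v ^ 2 - 1 ≠ 0 := by
    intro h
    obtain rfl : v = 1 := by nlinarith
    linarith
  have h : v ^ 6 * (v * (2 * c ^ 2 + 1) - 3 * c) = v * (v ^ 2 - 1) ^ 2 * (v ^ 2 + 2) := by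
    linear_combination (2 * v * (v ^ 3 * c + 1) - 3 * v ^ 3) * hvc
  have : 0 < v ^ 6 * (v * (2 * c ^ 2 + 1) - 3 * c) := by rw [h]; positivity
  linarith [pos_of_mul_pos_right this (by positivity)]

lemma lt_sinh_mul_cosh_rpow_neg_third {s : ℝ} (hs : 0 < s) :
    s < sinh s * cosh s ^ (-(1 / 3) : ℝ) := by
  set f : ℝ → ℝ := fun x => sinh x * cosh x ^ (-(1 / 3) : ℝ) - x
  have hf : ∀ x, HasDerivAt f
      (cosh x * cosh x ^ (-(1 / 3) : ℝ)
        + sinh x * (sinh x * (-(1 / 3)) * cosh x ^ (-(1 / 3) - 1 : ℝ)) - 1) x := fun x =>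
    ((hasDerivAt_sinh x).mul ((hasDerivAt_cosh x).rpow_const (.inl (cosh_pos x).ne'))).sub
      (hasDerivAt_id x)
  have hmono : StrictMonoOn f (Set.Ici 0) := by
    refine strictMonoOn_of_deriv_pos (convex_Ici 0)
      (fun x _ => (hf x).continuousAt.continuousWithinAt) fun x hx => ?_
    rw [interior_Ici, Set.mem_Ioi] at hx
    have key := three_mul_lt_rpow_neg_third_mul (one_lt_cosh.mpr hx.ne')
    rw [(hf x).deriv, rpow_sub_one (cosh_pos x).ne']
    generalize cosh x ^ (-(1 / 3) : ℝ) = v at key ⊢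
    have hderiv : cosh x * v + sinh x * (sinh x * -(1 / 3) * (v / cosh x)) - 1
        = (v * (2 * cosh x ^ 2 + 1) - 3 * cosh x) / (3 * cosh x) := by
      field_simp
      linear_combination v * cosh_sq x
    rw [hderiv]
    exact div_pos (by linarith) (by positivity)
  simpa [f] using hmono Set.self_mem_Ici hs.le hs

lemma pow_three_mul_cosh_lt_sinh_pow_three {s : ℝ} (hs : 0 < s) :
    s ^ 3 * cosh s < sinh s ^ 3 := by
  have h := pow_lt_pow_left₀ (lt_sinh_mul_cosh_rpow_neg_third hs) hs.le three_ne_zero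
  calc s ^ 3 * cosh s < (sinh s * cosh s ^ (-(1 / 3) : ℝ)) ^ 3 * cosh s :=
        mul_lt_mul_of_pos_right h (cosh_pos s)
    _ = sinh s ^ 3 := by
        rw [mul_pow, mul_assoc, rpow_neg_third_pow_three_mul_self (cosh_pos s), mul_one]

lemma cosh_lt_sinh_div_self_pow_three {s : ℝ} (hs : s ≠ 0) : cosh s < (sinh s / s) ^ 3 := by
  wlog hpos : 0 < s generalizing s
  · simpa [neg_div_neg_eq] using
      this (neg_ne_zero.mpr hs) (neg_pos.mpr ((not_lt.mp hpos).lt_of_ne hs))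
  rw [div_pow, lt_div_iff₀ (by positivity), mul_comm]
  exact pow_three_mul_cosh_lt_sinh_pow_three hpos

lemma exp_mul_exp_mul_add_div_two_lt {x y : ℝ} (hxy : x ≠ y) :
    exp x * exp y * ((exp x + exp y) / 2) < ((exp x - exp y) / (x - y)) ^ 3 := by
  obtain ⟨m, s, rfl, rfl⟩ : ∃ m s, x = m + s ∧ y = m - s :=
    ⟨(x + y) / 2, (x - y) / 2, by ring, by ring⟩
  have hs : s ≠ 0 := by rintro rfl; simp at hxy
  have hlhs : exp (m + s) * exp (m - s) * ((exp (m + s) + exp (m - s)) / 2)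
      = exp m ^ 3 * cosh s := by
    rw [cosh_eq, sub_eq_add_neg, exp_add, exp_add, exp_neg]
    field_simp
  have hrhs : (exp (m + s) - exp (m - s)) / (m + s - (m - s)) = exp m * (sinh s / s) := by
    rw [sinh_eq, show m + s - (m - s) = 2 * s by ring, sub_eq_add_neg m, exp_add, exp_add]
    field_simp
  rw [hlhs, hrhs, mul_pow]
  exact mul_lt_mul_of_pos_left (cosh_lt_sinh_div_self_pow_three hs) (by positivity)

lemma mul_mul_add_div_two_lt_logMean_pow_three {a b : ℝ} (ha : 0 < a) (hb : 0 < b)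
    (hab : a ≠ b) : a * b * ((a + b) / 2) < ((a - b) / (log a - log b)) ^ 3 := by
  have hlog : log a ≠ log b := fun h => hab (log_injOn_pos ha hb h)
  simpa [exp_log ha, exp_log hb] using exp_mul_exp_mul_add_div_two_lt hlog

section
variable {A G L : ℝ}

lemma two_mul_mul_sq_lt_of_sq_mul_lt_pow_three (hA : 0 < A) (h : G ^ 2 * A < L ^ 3) :
    2 * A * G ^ 2 < L ^ 2 * A + L * G ^ 2 := by
  have hL : 0 < L := (Odd.pow_pos_iff (by decide)).mp ((by positivity : 0 ≤ G ^ 2 * A).trans_lt h)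
  have : 0 < L * (L ^ 2 * A + L * G ^ 2 - 2 * A * G ^ 2) := by
    nlinarith [mul_pos hA (sub_pos.mpr h), mul_nonneg (sq_nonneg G) (sq_nonneg (A - L))]
  linarith [pos_of_mul_pos_right this hL.le]

lemma three_mul_mul_lt_of_sq_mul_lt_pow_three (hA : 0 < A) (hG : 0 < G)
    (h : G ^ 2 * A < L ^ 3) : 3 * A * G < 2 * L * A + L * G := by
  have hL : 0 < L := (Odd.pow_pos_iff (by decide)).mp ((by positivity : 0 ≤ G ^ 2 * A).trans_lt h)
  have amgm : 27 * A ^ 2 * G ≤ (2 * A + G) ^ 3 := by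
    nlinarith [mul_nonneg (sq_nonneg (A - G)) (by positivity : (0 : ℝ) ≤ 8 * A + G)]
  have hcube : (3 * A * G) ^ 3 < (L * (2 * A + G)) ^ 3 :=
    calc (3 * A * G) ^ 3 = G ^ 2 * A * (27 * A ^ 2 * G) := by ring
      _ ≤ G ^ 2 * A * (2 * A + G) ^ 3 := by gcongr
      _ < L ^ 3 * (2 * A + G) ^ 3 := by gcongr
      _ = (L * (2 * A + G)) ^ 3 := by ring
  linarith [lt_of_pow_lt_pow_left₀ 3 (by positivity) hcube]

end

theorem stmt16 (a b : ℝ) (ha : 0 < a) (hb : 0 < b) (hab : a ≠ b)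
    (A G L : ℝ) (hA : A = (a+b)/2) (hG : G = Real.sqrt (a*b))
    (hL : L = (a-b)/(Real.log a - Real.log b)) :
    L^2*A + L*G^2 > 2*A*G^2 ∧ 2*L*A + L*G > 3*A*G := by
  have hA₀ : 0 < A := by rw [hA]; positivity
  have hG₀ : 0 < G := by rw [hG]; positivity
  have h : G ^ 2 * A < L ^ 3 := by
    rw [hA, hG, hL, sq_sqrt (by positivity)]
    exact mul_mul_add_div_two_lt_logMean_pow_three ha hb hab
  exact ⟨two_mul_mul_sq_lt_of_sq_mul_lt_pow_three hA₀ h,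
    three_mul_mul_lt_of_sq_mul_lt_pow_three hA₀ hG₀ h⟩
end

section
/- For all x in (0, π/2), sin(x)/x > ∛(cos x) > 3·cos x/(2·cos x + 1). -/
/-!
Cubing reduces the first inequality to `cos x < (sin x / x) ^ 3`. The Taylor bounds
`sin x ≥ x - x³/6` and `cos x ≤ 1 - x²/2 + x⁴/24` turn it into the polynomial inequality
`(1 - x²/6)³ - (1 - x²/2 + x⁴/24) = x⁴ (9 - x²) / 216 > 0`. Writing `cos x = t³`, the second
inequality is AM-GM in the form `2 t³ + 1 - 3 t² = (t - 1)² (2 t + 1) > 0`.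
-/

open Real Set

namespace Real

theorem cos_le_one_sub_sq_div_two_add_pow_four_div (x : ℝ) :
    cos x ≤ 1 - x ^ 2 / 2 + x ^ 4 / 24 := by
  wlog hx : 0 ≤ x
  · simpa [even_two.neg_pow, (by decide : Even 4).neg_pow] using this (-x) (by linarith)
  let f (t : ℝ) : ℝ := 1 - t ^ 2 / 2 + t ^ 4 / 24 - cos t
  have hderiv (t : ℝ) : deriv f t = sin t - (t - t ^ 3 / 6) := by
    simp (disch := fun_prop) [f]
    ring
  have hmono : MonotoneOn f (Ici 0) := by
    apply monotoneOn_of_deriv_nonneg (convex_Ici 0) (by fun_prop) (by fun_prop)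
    intro t ht
    rw [interior_Ici] at ht
    simpa [hderiv] using sin_ge_sub_cube (le_of_lt ht)
  have h0 : f 0 ≤ f x := hmono self_mem_Ici hx hx
  simp only [f] at h0
  norm_num at h0
  linarith

theorem cos_lt_sin_div_pow_three {x : ℝ} (hx : 0 < x) (hx6 : x ^ 2 ≤ 6) :
    cos x < (sin x / x) ^ 3 := by
  have hpoly : 1 - x ^ 2 / 2 + x ^ 4 / 24 < (1 - x ^ 2 / 6) ^ 3 := by
    nlinarith [pow_pos hx 4]
  have hsin : 1 - x ^ 2 / 6 ≤ sin x / x := by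
    rw [le_div_iff₀ hx]
    linarith [sin_ge_sub_cube hx.le]
  calc cos x ≤ 1 - x ^ 2 / 2 + x ^ 4 / 24 := cos_le_one_sub_sq_div_two_add_pow_four_div x
    _ < (1 - x ^ 2 / 6) ^ 3 := hpoly
    _ ≤ (sin x / x) ^ 3 := pow_le_pow_left₀ (by linarith) hsin 3

end Real

theorem three_mul_pow_three_div_lt {t : ℝ} (ht : 0 < t) (ht1 : t ≠ 1) :
    3 * t ^ 3 / (2 * t ^ 3 + 1) < t := by
  have hamgm : 0 < (t - 1) ^ 2 * (2 * t + 1) :=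
    mul_pos (sq_pos_of_ne_zero (sub_ne_zero.2 ht1)) (by linarith)
  rw [div_lt_iff₀ (by positivity)]
  nlinarith

theorem stmt17 (x : ℝ) (hx : 0 < x) (hx2 : x < π/2) :
    Real.sin x/x > (Real.cos x) ^ ((1:ℝ)/3) ∧
    (Real.cos x) ^ ((1:ℝ)/3) > 3*Real.cos x/(2*Real.cos x + 1) := by
  have hcos : 0 < cos x := cos_pos_of_mem_Ioo ⟨by linarith, hx2⟩
  have hcos1 : cos x ≠ 1 := fun h =>
    hx.ne' ((cos_eq_one_iff_of_lt_of_lt (by linarith [pi_pos]) (by linarith [pi_pos])).1 h)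
  have hsinc : 0 < sin x / x := div_pos (sin_pos_of_pos_of_lt_pi hx (by linarith [pi_pos])) hx
  have hx6 : x ^ 2 ≤ 6 := by nlinarith [pi_lt_d2]
  have ht : (cos x ^ ((1:ℝ)/3)) ^ 3 = cos x := by
    simpa using rpow_inv_natCast_pow hcos.le three_ne_zero
  set t := cos x ^ ((1:ℝ)/3)
  constructor
  · exact lt_of_pow_lt_pow_left₀ 3 hsinc.le (ht ▸ cos_lt_sin_div_pow_three hx hx6)
  · rw [← ht]
    exact three_mul_pow_three_div_lt (rpow_pos_of_pos hcos _) fun h => hcos1 (by rw [← ht, h, one_pow])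
end

section
/- For all x > 0, sinh(x)/x > ∛(cosh x) > 3·cosh x/(2·cosh x + 1). -/
/-!
Put `c = cosh x`. The right inequality is elementary: with `t = c ^ (1/3) > 1` it reads
`3 t³ < t (2 t³ + 1)`, i.e. `(t - 1)² (2 t + 1) > 0`.

The left one is Lazarević's inequality `(sinh x / x)³ > cosh x`. Its logarithmic form
`3 log (sinh y / y) - log (cosh y)` tends to `0` as `y → 0⁺` and is strictly increasing, because
its derivative has the sign of `y (2 cosh² y + 1) - 3 sinh y cosh y`. At `y = x / 2` the latter is
`(x cosh x + 2 x - 3 sinh x) / 2`, whose positivity follows by differentiating three times.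
-/

open Real Set Filter Topology

lemma pos_of_hasDerivAt_of_deriv_pos {f f' : ℝ → ℝ} (hf : ∀ u, HasDerivAt f (f' u) u)
    (h0 : f 0 = 0) (hf' : ∀ u > 0, 0 < f' u) {x : ℝ} (hx : 0 < x) : 0 < f x := by
  have hmono : StrictMonoOn f (Ici 0) := by
    refine strictMonoOn_of_hasDerivWithinAt_pos (convex_Ici 0)
      (fun u _ ↦ (hf u).continuousAt.continuousWithinAt) (fun u _ ↦ (hf u).hasDerivWithinAt) ?_
    rw [interior_Ici]
    exact hf'
  simpa [h0] using hmono self_mem_Ici hx.le hx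

lemma StrictMonoOn.lt_of_tendsto_nhdsGT {f : ℝ → ℝ} {a L x : ℝ} (hf : StrictMonoOn f (Ioi a))
    (hlim : Tendsto f (𝓝[>] a) (𝓝 L)) (hx : a < x) : L < f x := by
  obtain ⟨m, ham, hmx⟩ := exists_between hx
  have hLm : L ≤ f m := by
    refine le_of_tendsto hlim ?_
    filter_upwards [Ioo_mem_nhdsGT ham] with y hy
    exact (hf hy.1 ham hy.2).le
  exact hLm.trans_lt (hf ham (ham.trans hmx) hmx)

namespace Real

lemma sinh_lt_mul_cosh {x : ℝ} (hx : 0 < x) : sinh x < x * cosh x := by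
  have := pos_of_hasDerivAt_of_deriv_pos (f := fun u ↦ u * cosh u - sinh u)
    (f' := fun u ↦ u * sinh u)
    (fun u ↦ ((hasDerivAt_id u).mul (hasDerivAt_cosh u)).sub (hasDerivAt_sinh u) |>.congr_deriv
      (by simp only [id_eq]; ring))
    (by simp) (fun u hu ↦ mul_pos hu (sinh_pos_iff.2 hu)) hx
  linarith

lemma two_mul_cosh_sub_two_lt_mul_sinh {x : ℝ} (hx : 0 < x) : 2 * cosh x - 2 < x * sinh x := by
  have := pos_of_hasDerivAt_of_deriv_pos (f := fun u ↦ u * sinh u - 2 * cosh u + 2)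
    (f' := fun u ↦ u * cosh u - sinh u)
    (fun u ↦ (((hasDerivAt_id u).mul (hasDerivAt_sinh u)).sub
      ((hasDerivAt_cosh u).const_mul 2)).add_const 2 |>.congr_deriv (by simp only [id_eq]; ring))
    (by simp) (fun u hu ↦ sub_pos.2 (sinh_lt_mul_cosh hu)) hx
  linarith

lemma three_mul_sinh_lt_mul_cosh_add_two_mul {x : ℝ} (hx : 0 < x) :
    3 * sinh x < x * cosh x + 2 * x := by
  have := pos_of_hasDerivAt_of_deriv_pos (f := fun u ↦ u * cosh u + 2 * u - 3 * sinh u)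
    (f' := fun u ↦ u * sinh u - 2 * cosh u + 2)
    (fun u ↦ (((hasDerivAt_id u).mul (hasDerivAt_cosh u)).add
      ((hasDerivAt_id u).const_mul 2)).sub ((hasDerivAt_sinh u).const_mul 3) |>.congr_deriv
        (by simp only [id_eq]; ring))
    (by simp) (fun u hu ↦ by linarith [two_mul_cosh_sub_two_lt_mul_sinh hu]) hx
  linarith

lemma three_mul_sinh_mul_cosh_lt {x : ℝ} (hx : 0 < x) :
    3 * sinh x * cosh x < x * (2 * cosh x ^ 2 + 1) := by
  have h := three_mul_sinh_lt_mul_cosh_add_two_mul (by linarith : 0 < 2 * x)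
  rw [cosh_two_mul, sinh_two_mul] at h
  nlinarith [sinh_sq x]

lemma tendsto_sinh_div_self : Tendsto (fun x ↦ sinh x / x) (𝓝[≠] 0) (𝓝 1) := by
  simpa [div_eq_inv_mul] using (hasDerivAt_sinh 0).tendsto_slope_zero

noncomputable def lazarevicGap (y : ℝ) : ℝ := 3 * log (sinh y / y) - log (cosh y)

lemma hasDerivAt_lazarevicGap {x : ℝ} (hx : 0 < x) :
    HasDerivAt lazarevicGap (3 * (cosh x / sinh x - 1 / x) - sinh x / cosh x) x := by
  have hs := sinh_pos_iff.2 hx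
  have hq := ((hasDerivAt_sinh x).div (hasDerivAt_id x) hx.ne').log (div_pos hs hx).ne'
  have hc := (hasDerivAt_cosh x).log (cosh_pos x).ne'
  refine ((hq.const_mul 3).sub hc).congr_deriv ?_
  simp only [Pi.div_apply, id_eq]
  field_simp

lemma strictMonoOn_lazarevicGap : StrictMonoOn lazarevicGap (Ioi 0) := by
  refine strictMonoOn_of_hasDerivWithinAt_pos (convex_Ioi 0)
    (f' := fun y ↦ 3 * (cosh y / sinh y - 1 / y) - sinh y / cosh y)
    (fun y hy ↦ (hasDerivAt_lazarevicGap hy).continuousAt.continuousWithinAt)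
    (fun y hy ↦ ?_) (fun y hy ↦ ?_) <;> rw [interior_Ioi, mem_Ioi] at hy
  · exact (hasDerivAt_lazarevicGap hy).hasDerivWithinAt
  · have hs := sinh_pos_iff.2 hy
    have hc := cosh_pos y
    have key : 0 < (y * (2 * cosh y ^ 2 + 1) - 3 * sinh y * cosh y) / (y * sinh y * cosh y) :=
      div_pos (sub_pos.2 (three_mul_sinh_mul_cosh_lt hy)) (by positivity)
    convert key using 1
    field_simp
    rw [sinh_sq]
    ring

lemma tendsto_lazarevicGap_nhdsGT_zero : Tendsto lazarevicGap (𝓝[>] 0) (𝓝 0) := by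
  have h1 := ((continuousAt_log one_ne_zero).tendsto.comp
    (tendsto_sinh_div_self.mono_left (nhdsGT_le_nhdsNE 0))).const_mul 3
  have h2 := ((continuousAt_log (cosh_pos 0).ne').tendsto.comp
    continuous_cosh.continuousAt.tendsto).mono_left (nhdsWithin_le_nhds (s := Ioi 0))
  unfold lazarevicGap
  simpa [Function.comp_def] using h1.sub h2

lemma cosh_lt_sinh_div_self_pow_three {x : ℝ} (hx : 0 < x) : cosh x < (sinh x / x) ^ 3 := by
  have h := strictMonoOn_lazarevicGap.lt_of_tendsto_nhdsGT tendsto_lazarevicGap_nhdsGT_zero hx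
  have hq : 0 < sinh x / x := div_pos (sinh_pos_iff.2 hx) hx
  rw [lazarevicGap] at h
  rw [← log_lt_log_iff (cosh_pos x) (by positivity), log_pow]
  push_cast
  linarith

lemma cosh_rpow_one_third_lt_sinh_div_self {x : ℝ} (hx : 0 < x) :
    cosh x ^ (1 / 3 : ℝ) < sinh x / x := by
  have hq : 0 < sinh x / x := div_pos (sinh_pos_iff.2 hx) hx
  rw [one_div, rpow_inv_lt_iff_of_pos (cosh_pos x).le hq.le (by norm_num)]
  exact_mod_cast cosh_lt_sinh_div_self_pow_three hx

lemma three_mul_div_two_mul_add_one_lt_rpow_one_third {c : ℝ} (hc : 1 < c) :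
    3 * c / (2 * c + 1) < c ^ (1 / 3 : ℝ) := by
  set t := c ^ (1 / 3 : ℝ)
  have ht : 1 < t := one_lt_rpow hc (by norm_num)
  have htc : t ^ 3 = c := by
    rw [← rpow_natCast, ← rpow_mul (by linarith)]
    norm_num
  rw [div_lt_iff₀ (by linarith), ← htc]
  nlinarith [sq_nonneg (t - 1)]

end Real

theorem stmt18 (x : ℝ) (hx : 0 < x) :
    Real.sinh x/x > (Real.cosh x) ^ ((1:ℝ)/3) ∧
    (Real.cosh x) ^ ((1:ℝ)/3) > 3*Real.cosh x/(2*Real.cosh x + 1) :=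
  ⟨Real.cosh_rpow_one_third_lt_sinh_div_self hx,
    Real.three_mul_div_two_mul_add_one_lt_rpow_one_third (Real.one_lt_cosh.2 hx.ne')⟩
end
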